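/- arXiv:2508.02707 — 5 statements merged into one kernel-verified Lean document; each statement's English description precedes it below -/
import Mathlib

section
/- Let ψ, ω : ℝ² → ℝ be continuously differentiable and compactly supported, with ψ twice continuously differentiable. Then ∫_{ℝ²} {ψ,ω}(x)·ψ(x) dμ(x) = 0. -/
open MeasureTheory

/-- The Poisson bracket `{f,g} = ∂₁f ∂₂g − ∂₂f ∂₁g = ∇⊥f · ∇g` on `ℝ²`. -/
noncomputable def poissonBracket (f g : ℝ × ℝ → ℝ) (x : ℝ × ℝ) : ℝ :=
  fderiv ℝ f x (1, 0) * fderiv ℝ g x (0, 1) - fderiv ℝ f x (0, 1) * fderiv ℝ g x (1, 0)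

/-!
Since `{ψ,ψ} = 0`, the Leibniz rule gives `{ψ,ω} ψ = {ψ, ψω}`. The integral of a Poisson bracket
`{f,g}` with `g` compactly supported vanishes: integrating by parts,
`∫ ∂₁f ∂₂g = -∫ ∂₂∂₁f g` and `∫ ∂₂f ∂₁g = -∫ ∂₁∂₂f g`, and the mixed second derivatives agree.
-/

section FDeriv

variable {𝕜 E F : Type*} [NontriviallyNormedField 𝕜] [NormedAddCommGroup E] [NormedSpace 𝕜 E]
  [NormedAddCommGroup F] [NormedSpace 𝕜 F]

theorem fderiv_fderiv_apply {f : E → F} {x : E} (hf : DifferentiableAt 𝕜 (fderiv 𝕜 f) x)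
    (v w : E) : fderiv 𝕜 (fun y ↦ fderiv 𝕜 f y v) x w = fderiv 𝕜 (fderiv 𝕜 f) x w v := by
  rw [fderiv_clm_apply hf (differentiableAt_const v), fderiv_const_apply]
  simp

end FDeriv

section IntegrationByParts

variable {E : Type*} [NormedAddCommGroup E] [NormedSpace ℝ E] [FiniteDimensional ℝ E]
  [MeasurableSpace E] [BorelSpace E] {μ : Measure E} [μ.IsAddHaarMeasure]

theorem integral_mul_fderiv_eq_neg_fderiv_mul_of_hasCompactSupport {f g : E → ℝ}
    (hf : ContDiff ℝ 1 f) (hg : ContDiff ℝ 1 g) (hg_supp : HasCompactSupport g) (v : E) :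
    ∫ x, f x * fderiv ℝ g x v ∂μ = -∫ x, fderiv ℝ f x v * g x ∂μ := by
  have hf' : Continuous (fderiv ℝ f · v) :=
    (hf.continuous_fderiv one_ne_zero).clm_apply continuous_const
  have hg' : Continuous (fderiv ℝ g · v) :=
    (hg.continuous_fderiv one_ne_zero).clm_apply continuous_const
  exact integral_mul_fderiv_eq_neg_fderiv_mul_of_integrable
    ((hf'.mul hg.continuous).integrable_of_hasCompactSupport hg_supp.mul_left)
    ((hf.continuous.mul hg').integrable_of_hasCompactSupport (hg_supp.fderiv_apply ℝ v).mul_left)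
    ((hf.continuous.mul hg.continuous).integrable_of_hasCompactSupport hg_supp.mul_left)
    (fun x _ ↦ hf.differentiable one_ne_zero x) (fun x _ ↦ hg.differentiable one_ne_zero x)

end IntegrationByParts

theorem poissonBracket_self (f : ℝ × ℝ → ℝ) : poissonBracket f f = 0 := by
  ext x
  simp only [poissonBracket, Pi.zero_apply]
  ring

theorem poissonBracket_mul_right {f g h : ℝ × ℝ → ℝ} {x : ℝ × ℝ}
    (hg : DifferentiableAt ℝ g x) (hh : DifferentiableAt ℝ h x) :
    poissonBracket f (g * h) x = poissonBracket f g x * h x + g x * poissonBracket f h x := by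
  simp only [poissonBracket, fderiv_mul hg hh, add_apply, smul_apply, smul_eq_mul]
  ring

theorem integral_poissonBracket_eq_zero {f g : ℝ × ℝ → ℝ} (hf : ContDiff ℝ 2 f)
    (hg : ContDiff ℝ 1 g) (hg_supp : HasCompactSupport g) : ∫ x, poissonBracket f g x = 0 := by
  have hdf : ContDiff ℝ 1 (fderiv ℝ f) := hf.fderiv_right le_rfl
  have hdf_apply (v : ℝ × ℝ) : ContDiff ℝ 1 (fderiv ℝ f · v) := hdf.clm_apply contDiff_const
  have hmixed : (fun x ↦ fderiv ℝ (fderiv ℝ f · (1, 0)) x (0, 1) * g x) =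
      fun x ↦ fderiv ℝ (fderiv ℝ f · (0, 1)) x (1, 0) * g x := by
    ext x
    have hsymm : IsSymmSndFDerivAt ℝ f x := hf.contDiffAt.isSymmSndFDerivAt (by simp)
    simp only [fderiv_fderiv_apply (hdf.differentiable one_ne_zero x), hsymm.eq]
  have hint (v w : ℝ × ℝ) : Integrable (fun x ↦ fderiv ℝ f x v * fderiv ℝ g x w) :=
    ((hdf_apply v).continuous.mul ((hg.continuous_fderiv one_ne_zero).clm_apply continuous_const)
      ).integrable_of_hasCompactSupport (hg_supp.fderiv_apply ℝ w).mul_left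
  calc ∫ x, poissonBracket f g x
      = (∫ x, fderiv ℝ f x (1, 0) * fderiv ℝ g x (0, 1)) -
          ∫ x, fderiv ℝ f x (0, 1) * fderiv ℝ g x (1, 0) := integral_sub (hint _ _) (hint _ _)
    _ = 0 := by
      rw [integral_mul_fderiv_eq_neg_fderiv_mul_of_hasCompactSupport (hdf_apply _) hg hg_supp,
        integral_mul_fderiv_eq_neg_fderiv_mul_of_hasCompactSupport (hdf_apply _) hg hg_supp,
        hmixed, sub_self]

theorem integral_poissonBracket_self_eq_zero_general (ψ ω : ℝ × ℝ → ℝ)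
    (hψ : ContDiff ℝ 2 ψ) (hω : ContDiff ℝ 1 ω)
    (hψsupp : HasCompactSupport ψ) :
    ∫ x, poissonBracket ψ ω x * ψ x = 0 := by
  have hψ₁ : ContDiff ℝ 1 ψ := hψ.of_le one_le_two
  have hleibniz (x : ℝ × ℝ) : poissonBracket ψ ω x * ψ x = poissonBracket ψ (ψ * ω) x := by
    rw [poissonBracket_mul_right (hψ₁.differentiable one_ne_zero x)
      (hω.differentiable one_ne_zero x), poissonBracket_self, Pi.zero_apply]
    ring
  simp_rw [hleibniz]
  exact integral_poissonBracket_eq_zero hψ (hψ₁.mul hω) hψsupp.mul_right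

theorem integral_poissonBracket_self_eq_zero (ψ ω : ℝ × ℝ → ℝ)
    (hψ : ContDiff ℝ 2 ψ) (hω : ContDiff ℝ 1 ω)
    (hψsupp : HasCompactSupport ψ) (hωsupp : HasCompactSupport ω) :
    ∫ x, poissonBracket ψ ω x * ψ x = 0 :=
  integral_poissonBracket_self_eq_zero_general ψ ω hψ hω hψsupp
end

section
/- Let n ≥ 1, let B : ℝ → Matrix (Fin n) (Fin n) ℂ be any map, and let W : ℝ → Matrix (Fin n) (Fin n) ℂ be differentiable with W'(t) = B(t)·W(t) − W(t)·B(t) for all t ∈ ℝ. Then for every natural number k, the function t ↦ trace((W(t))^k) is constant on ℝ. -/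
/-! By the noncommutative product rule, `d/dt tr(W^k) = ∑ tr(W^i [B, W] W^(k-1-i))`, and each term
equals `tr([B, W] W^(k-1))` by cyclicity of the trace, which vanishes because `W` commutes with
`W^(k-1)`. A function with zero derivative on `ℝ` is constant. -/

open Matrix

attribute [local instance] Matrix.normedAddCommGroup Matrix.normedSpace

namespace Matrix

variable {m R : Type*} [Fintype m] [CommRing R]

theorem trace_commutator_mul_eq_zero_of_commute {A P : Matrix m m R}
    (B : Matrix m m R) (h : Commute A P) : trace ((B * A - A * B) * P) = 0 := by
  rw [sub_mul, trace_sub, sub_eq_zero, mul_assoc, h.eq, ← mul_assoc, mul_assoc A,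
    trace_mul_comm A]

theorem trace_pow_mul_commutator_mul_pow [DecidableEq m] (A B : Matrix m m R) (i j : ℕ) :
    trace (A ^ i * (B * A - A * B) * A ^ j) = 0 := by
  rw [trace_mul_comm, ← mul_assoc, ← pow_add, trace_mul_comm]
  exact trace_commutator_mul_eq_zero_of_commute B (Commute.self_pow A _)

end Matrix

theorem HasDerivAt.matrix_trace {𝕜 m R : Type*} [Fintype m] [NontriviallyNormedField 𝕜]
    [NormedAddCommGroup R] [NormedSpace 𝕜 R] {f : 𝕜 → Matrix m m R} {f' : Matrix m m R}
    {x : 𝕜} (hf : HasDerivAt f f' x) : HasDerivAt (fun y => (f y).trace) f'.trace x := by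
  have hentry (i : m) : HasDerivAt (fun y => f y i i) (f' i i) x :=
    hasDerivAt_pi.mp (hasDerivAt_pi.mp hf i) i
  exact HasDerivAt.fun_sum fun i _ => hentry i

theorem hasDerivAt_trace_pow_of_hasDerivAt_commutator {𝕜 m R : Type*} [Fintype m]
    [DecidableEq m] [NontriviallyNormedField 𝕜] [NormedCommRing R] [NormedAlgebra 𝕜 R]
    {B W : 𝕜 → Matrix m m R} {x : 𝕜} (hW : HasDerivAt W (B x * W x - W x * B x) x)
    (k : ℕ) : HasDerivAt (fun y => (W y ^ k).trace) 0 x := by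
  -- The sup norm is not submultiplicative; the operator norm induces the same topology.
  let : NormedRing (Matrix m m R) := Matrix.linftyOpNormedRing
  let : NormedAlgebra 𝕜 (Matrix m m R) := Matrix.linftyOpNormedAlgebra
  simpa only [trace_sum, trace_pow_mul_commutator_mul_pow, Finset.sum_const_zero]
    using (hW.fun_pow' k).matrix_trace

theorem isospectral_flow_trace_pow_const_general (n : ℕ)
    (B W : ℝ → Matrix (Fin n) (Fin n) ℂ)
    (hW : ∀ t : ℝ, HasDerivAt W (B t * W t - W t * B t) t) (k : ℕ) :
    ∀ s t : ℝ, (W t ^ k).trace = (W s ^ k).trace := by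
  have hderiv t := hasDerivAt_trace_pow_of_hasDerivAt_commutator (hW t) k
  exact fun s t => is_const_of_deriv_eq_zero (fun t => (hderiv t).differentiableAt)
    (fun t => (hderiv t).deriv) t s

theorem isospectral_flow_trace_pow_const (n : ℕ) (hn : 1 ≤ n)
    (B W : ℝ → Matrix (Fin n) (Fin n) ℂ)
    (hW : ∀ t : ℝ, HasDerivAt W (B t * W t - W t * B t) t) (k : ℕ) :
    ∀ s t : ℝ, (W t ^ k).trace = (W s ^ k).trace :=
  isospectral_flow_trace_pow_const_general n B W hW k
end

section
/- Let n ≥ 1, let B : ℝ → Matrix (Fin n) (Fin n) ℂ be any map, and let W : ℝ → Matrix (Fin n) (Fin n) ℂ be differentiable with W'(t) = B(t)·W(t) − W(t)·B(t) for all t ∈ ℝ. Then the characteristic polynomial of W(t) is independent of t: for all s, t ∈ ℝ, charpoly(W(t)) = charpoly(W(s)). -/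
/-!
Fix `z : ℂ`. Since the scalar matrix `z • 1` is central, `A = z • 1 - W` satisfies the same
Lax equation `A' = [B, A]`. By Jacobi's formula `(det A)' = tr (adj A · [B, A])`, and this trace
vanishes because `adj A` commutes with `A`. Hence `det (z • 1 - W t)`, the value of the
characteristic polynomial of `W t` at `z`, does not depend on `t`.
-/

open Matrix

attribute [local instance] Matrix.normedAddCommGroup Matrix.normedSpace

namespace Matrix

variable {ι R : Type*} [Fintype ι] [DecidableEq ι]

section CommRing

variable [CommRing R]

theorem det_updateCol_eq_sum_adjugate_mul (A : Matrix ι ι R) (i : ι) (b : ι → R) :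
    (A.updateCol i b).det = ∑ j, adjugate A i j * b j := by
  rw [← cramer_apply, cramer_eq_adjugate_mulVec]
  rfl

theorem sum_det_updateCol_eq_trace_adjugate_mul (A N : Matrix ι ι R) :
    ∑ i, (A.updateCol i (Nᵀ i)).det = trace (adjugate A * N) := by
  simp only [det_updateCol_eq_sum_adjugate_mul, trace, diag, mul_apply, transpose_apply]

theorem trace_adjugate_mul_commutator (A B : Matrix ι ι R) :
    trace (adjugate A * (B * A - A * B)) = 0 := by
  rw [Matrix.mul_sub, trace_sub, ← Matrix.mul_assoc, trace_mul_comm, ← Matrix.mul_assoc,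
    ← Matrix.mul_assoc, mul_adjugate, adjugate_mul, sub_self]

end CommRing

section NontriviallyNormedField

variable {𝕜 : Type*} [NontriviallyNormedField 𝕜] [NormedCommRing R] [NormedAlgebra 𝕜 R]

theorem hasDerivAt_det {M : 𝕜 → Matrix ι ι R} {M' : Matrix ι ι R} {t : 𝕜}
    (hM : HasDerivAt M M' t) :
    HasDerivAt (fun u ↦ (M u).det) (trace (adjugate (M t) * M')) t := by
  have hentry : ∀ i j, HasDerivAt (fun u ↦ M u i j) (M' i j) t := fun i j ↦
    hasDerivAt_pi.1 (hasDerivAt_pi.1 hM i) j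
  have hleibniz : HasDerivAt (fun u ↦ ∑ σ : Equiv.Perm ι, Equiv.Perm.sign σ • ∏ i, M u (σ i) i)
      (∑ σ : Equiv.Perm ι, Equiv.Perm.sign σ •
        ∑ i, (∏ j ∈ Finset.univ.erase i, M t (σ j) j) • M' (σ i) i) t :=
    HasDerivAt.fun_sum fun σ _ ↦
      (HasDerivAt.fun_finsetProd fun i _ ↦ hentry (σ i) i).const_smul _
  simp only [← det_apply] at hleibniz
  convert hleibniz using 1
  rw [← sum_det_updateCol_eq_trace_adjugate_mul]
  simp only [det_apply, Finset.smul_sum]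
  rw [Finset.sum_comm]
  refine Finset.sum_congr rfl fun σ _ ↦ Finset.sum_congr rfl fun i _ ↦ ?_
  rw [← Finset.mul_prod_erase _ _ (Finset.mem_univ i), updateCol_self, transpose_apply,
    smul_eq_mul, mul_comm]
  congr 2
  exact Finset.prod_congr rfl fun j hj ↦ updateCol_ne (Finset.ne_of_mem_erase hj)

theorem hasDerivAt_scalar_sub_of_commutator {W B : 𝕜 → Matrix ι ι R} {t : 𝕜} (z : R)
    (hW : HasDerivAt W (B t * W t - W t * B t) t) :
    HasDerivAt (fun u ↦ scalar ι z - W u)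
      (B t * (scalar ι z - W t) - (scalar ι z - W t) * B t) t := by
  refine (hW.const_sub (scalar ι z)).congr_deriv ?_
  rw [Matrix.mul_sub, Matrix.sub_mul, (scalar_commute z (Commute.all z) (B t)).eq]
  abel

end NontriviallyNormedField

theorem det_eq_of_hasDerivAt_commutator {𝕜 : Type*} [RCLike 𝕜] [NormedCommRing R]
    [NormedAlgebra 𝕜 R] {A B : 𝕜 → Matrix ι ι R}
    (hA : ∀ t, HasDerivAt A (B t * A t - A t * B t) t) (s t : 𝕜) :
    (A s).det = (A t).det := by
  have hdet : ∀ u, HasDerivAt (fun u ↦ (A u).det) 0 u := fun u ↦ by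
    simpa only [trace_adjugate_mul_commutator] using hasDerivAt_det (hA u)
  exact is_const_of_deriv_eq_zero (fun u ↦ (hdet u).differentiableAt) (fun u ↦ (hdet u).deriv) s t

end Matrix

theorem isospectral_flow_charpoly_const_general (n : ℕ)
    (B W : ℝ → Matrix (Fin n) (Fin n) ℂ)
    (hW : ∀ t : ℝ, HasDerivAt W (B t * W t - W t * B t) t) :
    ∀ s t : ℝ, (W t).charpoly = (W s).charpoly := by
  intro s t
  refine Polynomial.funext fun z ↦ ?_
  rw [eval_charpoly, eval_charpoly]
  exact det_eq_of_hasDerivAt_commutator (fun u ↦ hasDerivAt_scalar_sub_of_commutator z (hW u)) t s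

theorem isospectral_flow_charpoly_const (n : ℕ) (hn : 1 ≤ n)
    (B W : ℝ → Matrix (Fin n) (Fin n) ℂ)
    (hW : ∀ t : ℝ, HasDerivAt W (B t * W t - W t * B t) t) :
    ∀ s t : ℝ, (W t).charpoly = (W s).charpoly :=
  isospectral_flow_charpoly_const_general n B W hW
end

section
/- Let n ≥ 1 and let P̃, W̃ be n×n complex matrices that are skew-Hermitian, i.e. P̃ᴴ = −P̃ and W̃ᴴ = −W̃. Then both matrices (I − (1/2)P̃)·W̃·(I + (1/2)P̃) and (I + (1/2)P̃)·W̃·(I − (1/2)P̃) are skew-Hermitian. -/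
open Matrix

namespace skewAdjoint

variable {R A : Type*}

theorem smul_mem_of_isSelfAdjoint [Monoid R] [StarMul R] [AddCommGroup A] [StarAddMonoid A]
    [DistribMulAction R A] [StarModule R A] {r : R} (hr : IsSelfAdjoint r) {x : A}
    (hx : x ∈ skewAdjoint A) : r • x ∈ skewAdjoint A := by
  rw [mem_iff, star_smul, hr.star_eq, mem_iff.mp hx, smul_neg]

variable [Ring A] [StarRing A] {x : A}

theorem star_one_sub (hx : x ∈ skewAdjoint A) : star (1 - x) = 1 + x := by
  rw [star_sub, star_one, mem_iff.mp hx, sub_neg_eq_add]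

theorem star_one_add (hx : x ∈ skewAdjoint A) : star (1 + x) = 1 - x := by
  rw [← star_one_sub hx, star_star]

end skewAdjoint

-- The Cayley factors `1 ∓ P/2` are adjoint to each other, so each step is a congruence `A W Aᴴ`.
theorem midpoint_step_skewHermitian_general (n : ℕ)
    (P W : Matrix (Fin n) (Fin n) ℂ) (hP : Pᴴ = -P) (hW : Wᴴ = -W) :
    ((1 - (1 / 2 : ℂ) • P) * W * (1 + (1 / 2 : ℂ) • P))ᴴ
        = -((1 - (1 / 2 : ℂ) • P) * W * (1 + (1 / 2 : ℂ) • P)) ∧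
      ((1 + (1 / 2 : ℂ) • P) * W * (1 - (1 / 2 : ℂ) • P))ᴴ
        = -((1 + (1 / 2 : ℂ) • P) * W * (1 - (1 / 2 : ℂ) • P)) := by
  have hW : W ∈ skewAdjoint (Matrix (Fin n) (Fin n) ℂ) := hW
  have hQ : (1 / 2 : ℂ) • P ∈ skewAdjoint (Matrix (Fin n) (Fin n) ℂ) :=
    skewAdjoint.smul_mem_of_isSelfAdjoint (by simp [IsSelfAdjoint]) hP
  constructor
  · have := skewAdjoint.conjugate hW (1 - (1 / 2 : ℂ) • P)
    rwa [skewAdjoint.star_one_sub hQ] at this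
  · have := skewAdjoint.conjugate hW (1 + (1 / 2 : ℂ) • P)
    rwa [skewAdjoint.star_one_add hQ] at this

theorem midpoint_step_skewHermitian (n : ℕ) (hn : 1 ≤ n)
    (P W : Matrix (Fin n) (Fin n) ℂ) (hP : Pᴴ = -P) (hW : Wᴴ = -W) :
    ((1 - (1 / 2 : ℂ) • P) * W * (1 + (1 / 2 : ℂ) • P))ᴴ
        = -((1 - (1 / 2 : ℂ) • P) * W * (1 + (1 / 2 : ℂ) • P)) ∧
      ((1 + (1 / 2 : ℂ) • P) * W * (1 - (1 / 2 : ℂ) • P))ᴴ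
        = -((1 + (1 / 2 : ℂ) • P) * W * (1 - (1 / 2 : ℂ) • P)) :=
  midpoint_step_skewHermitian_general n P W hP hW
end

section
/- Let n ≥ 1 and m ≥ 0, let T_1, …, T_m be skew-Hermitian n×n complex matrices, let ν_1, …, ν_m be nonnegative reals, let P : ℝ → Matrix (Fin n) (Fin n) ℂ be any map, and let W : ℝ → Matrix (Fin n) (Fin n) ℂ be differentiable with W(t) skew-Hermitian for every t and W'(t) = [P(t), W(t)] + Σ_{i=1}^{m} ν_i [T_i, [T_i, W(t)]] for all t ∈ ℝ, where [A,B] = A·B − B·A. Then for every t, the derivative of the squared Frobenius norm s ↦ Re trace(W(s)·W(s)ᴴ) at t equals −2 Σ_{i=1}^{m} ν_i · Re trace([T_i, W(t)]·[T_i, W(t)]ᴴ); in particular the Frobenius norm of W(t) is nonincreasing in t. -/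
/-!
For skew-Hermitian `T`, the map `X ↦ [T, X]` is skew-adjoint for the Frobenius inner product
`⟨X, Y⟩ = tr (X Yᴴ)`, so `⟨[T, [T, W]], W⟩ = -‖[T, W]‖²`. The transport term `[P, W]` is orthogonal
to a skew-Hermitian `W`, since `tr ([P, W] W) = 0` by cyclicity. Hence
`d/dt ‖W‖² = 2 Re ⟨W', W⟩ = -2 Σ νᵢ ‖[Tᵢ, W]‖² ≤ 0`.
-/

open Matrix

attribute [local instance] Matrix.normedAddCommGroup Matrix.normedSpace

/-- The matrix commutator `[A, B] = A·B − B·A`. -/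
noncomputable def mcomm {n : ℕ} (A B : Matrix (Fin n) (Fin n) ℂ) : Matrix (Fin n) (Fin n) ℂ :=
  A * B - B * A

section Calculus

variable {𝕜 𝔸 ι : Type*} [NontriviallyNormedField 𝕜] [NormedCommRing 𝔸] [NormedAlgebra 𝕜 𝔸]
  [Fintype ι] {A B : 𝕜 → Matrix ι ι 𝔸} {A' B' : Matrix ι ι 𝔸} {t : 𝕜}

theorem hasDerivAt_trace_mul (hA : HasDerivAt A A' t) (hB : HasDerivAt B B' t) :
    HasDerivAt (fun s => (A s * B s).trace) ((A' * B t).trace + (A t * B').trace) t := by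
  have hentry {M : 𝕜 → Matrix ι ι 𝔸} {M'} (hM : HasDerivAt M M' t) (i j : ι) :
      HasDerivAt (fun s => M s i j) (M' i j) t :=
    hasDerivAt_pi.1 (hasDerivAt_pi.1 hM i) j
  simp only [trace, diag, mul_apply, ← Finset.sum_add_distrib]
  exact HasDerivAt.fun_sum fun i _ => HasDerivAt.fun_sum fun j _ =>
    (hentry hA i j).mul (hentry hB j i)

end Calculus

theorem hasDerivAt_re_trace_mul_conjTranspose_self {ι : Type*} [Fintype ι]
    {W : ℝ → Matrix ι ι ℂ} {W' : Matrix ι ι ℂ} {t : ℝ} (hW : HasDerivAt W W' t) :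
    HasDerivAt (fun s => (W s * (W s)ᴴ).trace.re) (2 * (W' * (W t)ᴴ).trace.re) t := by
  refine (Complex.reCLM.hasFDerivAt.comp_hasDerivAt t
    (hasDerivAt_trace_mul hW hW.star)).congr_deriv ?_
  have hconj : (W t * star W').trace = star (W' * (W t)ᴴ).trace := by
    rw [← trace_conjTranspose, conjTranspose_mul, conjTranspose_conjTranspose]; rfl
  rw [hconj, Complex.reCLM_apply, Complex.add_re, Complex.star_def, Complex.conj_re,
    star_eq_conjTranspose]
  ring

open ComplexOrder in
theorem re_trace_mul_conjTranspose_self_nonneg {ι : Type*} [Fintype ι] (C : Matrix ι ι ℂ) :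
    0 ≤ (C * Cᴴ).trace.re :=
  (Complex.nonneg_iff.1 (posSemidef_self_mul_conjTranspose C).trace_nonneg).1

section Commutator

variable {n : ℕ}

theorem trace_mcomm_mul (A X Y : Matrix (Fin n) (Fin n) ℂ) :
    (mcomm A X * Y).trace = -(X * mcomm A Y).trace := by
  simp only [mcomm, Matrix.sub_mul, Matrix.mul_sub, trace_sub, Matrix.mul_assoc]
  rw [trace_mul_comm A, Matrix.mul_assoc]
  ring

theorem conjTranspose_mcomm_of_skew {T : Matrix (Fin n) (Fin n) ℂ} (hT : Tᴴ = -T)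
    (X : Matrix (Fin n) (Fin n) ℂ) : (mcomm T X)ᴴ = mcomm T Xᴴ := by
  simp only [mcomm, conjTranspose_sub, conjTranspose_mul, hT, Matrix.neg_mul, Matrix.mul_neg]
  abel

theorem trace_mcomm_mcomm_mul_conjTranspose {T : Matrix (Fin n) (Fin n) ℂ} (hT : Tᴴ = -T)
    (W : Matrix (Fin n) (Fin n) ℂ) :
    (mcomm T (mcomm T W) * Wᴴ).trace = -(mcomm T W * (mcomm T W)ᴴ).trace := by
  rw [trace_mcomm_mul, conjTranspose_mcomm_of_skew hT]

theorem trace_mcomm_mul_self (A W : Matrix (Fin n) (Fin n) ℂ) : (mcomm A W * W).trace = 0 := by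
  have h := trace_mcomm_mul A W W
  rw [trace_mul_comm W] at h
  linear_combination h / 2

theorem trace_mcomm_mul_conjTranspose_self_of_skew (A : Matrix (Fin n) (Fin n) ℂ)
    {W : Matrix (Fin n) (Fin n) ℂ} (hW : Wᴴ = -W) : (mcomm A W * Wᴴ).trace = 0 := by
  rw [hW, Matrix.mul_neg, trace_neg, trace_mcomm_mul_self, neg_zero]

theorem re_trace_nide_mul_conjTranspose {m : ℕ} {T : Fin m → Matrix (Fin n) (Fin n) ℂ}
    (hT : ∀ i, (T i)ᴴ = -T i) (ν : Fin m → ℝ) (P : Matrix (Fin n) (Fin n) ℂ)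
    {W : Matrix (Fin n) (Fin n) ℂ} (hW : Wᴴ = -W) :
    ((mcomm P W + ∑ i, ν i • mcomm (T i) (mcomm (T i) W)) * Wᴴ).trace.re =
      -∑ i, ν i * (mcomm (T i) W * (mcomm (T i) W)ᴴ).trace.re := by
  simp only [Matrix.add_mul, Finset.sum_mul, Matrix.smul_mul, trace_add, trace_sum, trace_smul,
    trace_mcomm_mul_conjTranspose_self_of_skew P hW, trace_mcomm_mcomm_mul_conjTranspose (hT _),
    zero_add, Complex.re_sum, Complex.smul_re, smul_neg, Complex.neg_re, Finset.sum_neg_distrib,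
    smul_eq_mul]

end Commutator

theorem NIDE_dissipates_frobenius_norm_general (n m : ℕ)
    (T : Fin m → Matrix (Fin n) (Fin n) ℂ) (hT : ∀ i, (T i)ᴴ = -T i)
    (ν : Fin m → ℝ) (hν : ∀ i, 0 ≤ ν i)
    (P : ℝ → Matrix (Fin n) (Fin n) ℂ)
    (W : ℝ → Matrix (Fin n) (Fin n) ℂ) (hWskew : ∀ t : ℝ, (W t)ᴴ = -W t)
    (hW : ∀ t : ℝ,
      HasDerivAt W (mcomm (P t) (W t) + ∑ i : Fin m, ν i • mcomm (T i) (mcomm (T i) (W t))) t) :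
    (∀ t : ℝ,
      HasDerivAt (fun s : ℝ => ((W s * (W s)ᴴ).trace).re)
        (-2 * ∑ i : Fin m, ν i * ((mcomm (T i) (W t) * (mcomm (T i) (W t))ᴴ).trace).re) t) ∧
    (∀ s t : ℝ, s ≤ t → ((W t * (W t)ᴴ).trace).re ≤ ((W s * (W s)ᴴ).trace).re) := by
  set dissipation : ℝ → ℝ :=
    fun t => ∑ i, ν i * (mcomm (T i) (W t) * (mcomm (T i) (W t))ᴴ).trace.re
  have hderiv (t : ℝ) :
      HasDerivAt (fun s => (W s * (W s)ᴴ).trace.re) (-2 * dissipation t) t :=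
    (hasDerivAt_re_trace_mul_conjTranspose_self (hW t)).congr_deriv
      (by rw [re_trace_nide_mul_conjTranspose hT ν (P t) (hWskew t), mul_neg, neg_mul])
  refine ⟨hderiv, fun s t hst => antitone_of_hasDerivAt_nonpos hderiv (fun t => ?_) hst⟩
  exact mul_nonpos_of_nonpos_of_nonneg (by norm_num)
    (Finset.sum_nonneg fun i _ => mul_nonneg (hν i) (re_trace_mul_conjTranspose_self_nonneg _))

theorem NIDE_dissipates_frobenius_norm (n m : ℕ) (hn : 1 ≤ n)
    (T : Fin m → Matrix (Fin n) (Fin n) ℂ) (hT : ∀ i, (T i)ᴴ = -T i)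
    (ν : Fin m → ℝ) (hν : ∀ i, 0 ≤ ν i)
    (P : ℝ → Matrix (Fin n) (Fin n) ℂ)
    (W : ℝ → Matrix (Fin n) (Fin n) ℂ) (hWskew : ∀ t : ℝ, (W t)ᴴ = -W t)
    (hW : ∀ t : ℝ,
      HasDerivAt W (mcomm (P t) (W t) + ∑ i : Fin m, ν i • mcomm (T i) (mcomm (T i) (W t))) t) :
    (∀ t : ℝ,
      HasDerivAt (fun s : ℝ => ((W s * (W s)ᴴ).trace).re)
        (-2 * ∑ i : Fin m, ν i * ((mcomm (T i) (W t) * (mcomm (T i) (W t))ᴴ).trace).re) t) ∧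
    (∀ s t : ℝ, s ≤ t → ((W t * (W t)ᴴ).trace).re ≤ ((W s * (W s)ᴴ).trace).re) :=
  NIDE_dissipates_frobenius_norm_general n m T hT ν hν P W hWskew hW
end
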